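/- Let P be a probability measure on a measurable space Ω and f : Ω → ℝ a P-integrable measurable function, not P-a.s. constant, with centered version f̄ := f − E_P[f] having finite moment generating function E_P[exp(c·f̄)] for all c in a neighborhood of 0. Let d₊ be the supremum of c > 0 with E_P[exp(c·f̄)] < ∞, Λ(c) := log E_P[exp(c·f̄)], and η₊ := lim_{c ↗ d₊}( c·Λ′(c) − Λ(c) ). Then for every η with 0 < η < η₊: sup { E_Q[f] − E_P[f] : Q a probability measure, Q ≪ P, f Q-integrable, kl(Q‖P) ≤ η } = inf_{c>0} [ (1/c)·log E_P[exp(c·f̄)] + η/c ], and the supremum is attained at the exponential tilt Q⁺ = P_{c₊}, where c₊ ∈ (0, d₊) is the unique parameter with kl(P_{c₊}‖P) = η. The analogous statement holds for the infimum: inf over the same set of Q of E_Q[f] − E_P[f] equals − inf_{c>0} [ (1/c)·log E_P[exp(−c·f̄)] + η/c ] and is attained at an exponential tilt with negative parameter (for η below the corresponding threshold for −f). -/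

import Mathlib

open MeasureTheory Real Filter Set
open scoped Classical

/-- The Kullback–Leibler divergence `kl(Q‖P)`: equal to `∫ log (dQ/dP) dQ` when `Q ≪ P`
and the log-likelihood ratio is `Q`-integrable, and `+∞` otherwise. -/
noncomputable def klDiv {Ω : Type*} [MeasurableSpace Ω] (Q P : Measure Ω) : EReal :=
  if Q ≪ P ∧ Integrable (llr Q P) Q then ((∫ ω, llr Q P ω ∂Q : ℝ) : EReal) else ⊤

/-- The expression `(1/c) log E_P[exp(c·g)] + η/c`, interpreted as `+∞` at those `c`
where the exponential moment is infinite. -/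
noncomputable def uqObj {Ω : Type*} [MeasurableSpace Ω] (P : Measure Ω) (g : Ω → ℝ)
    (η c : ℝ) : EReal :=
  if Integrable (fun ω => Real.exp (c * g ω)) P then
    (((1 / c) * Real.log (∫ ω, Real.exp (c * g ω) ∂P) + η / c : ℝ) : EReal)
  else ⊤


set_option linter.unusedSectionVars false
set_option maxHeartbeats 1000000
section UQAux

section AuxIneq

lemma uq_exp_interval_le {a b t : ℝ} (x : ℝ) (hat : a ≤ t) (htb : t ≤ b) :
    Real.exp (t * x) ≤ Real.exp (a * x) + Real.exp (b * x) := by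
  rcases le_or_gt 0 x with hx | hx
  · exact (Real.exp_le_exp.2 (mul_le_mul_of_nonneg_right htb hx)).trans
      (le_add_of_nonneg_left (Real.exp_pos _).le)
  · exact (Real.exp_le_exp.2 (mul_le_mul_of_nonpos_right hat hx.le)).trans
      (le_add_of_nonneg_right (Real.exp_pos _).le)

lemma uq_abs_pow_le_exp {δ : ℝ} (hδ : 0 < δ) (n : ℕ) (x : ℝ) :
    |x| ^ n ≤ (n.factorial / δ ^ n) * Real.exp (δ * |x|) := by
  have h0 : (0:ℝ) ≤ δ * |x| := mul_nonneg hδ.le (abs_nonneg x)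
  have h1 : (δ * |x|) ^ n / (n.factorial : ℝ) ≤ Real.exp (δ * |x|) := by
    calc (δ * |x|) ^ n / (n.factorial : ℝ)
        ≤ ∑ i ∈ Finset.range (n + 1), (δ * |x|) ^ i / (i.factorial : ℝ) := by
          refine Finset.single_le_sum (f := fun i => (δ * |x|) ^ i / (i.factorial : ℝ))
            (fun i _ => by positivity) (Finset.self_mem_range_succ n)
      _ ≤ Real.exp (δ * |x|) := Real.sum_le_exp_of_nonneg h0 _
  have hfac : (0:ℝ) < (n.factorial : ℝ) := by exact_mod_cast n.factorial_pos
  have h2 : (δ * |x|) ^ n ≤ (n.factorial : ℝ) * Real.exp (δ * |x|) := by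
    rw [div_le_iff₀ hfac] at h1; linarith [h1]
  have h3 : |x| ^ n = (δ * |x|) ^ n / δ ^ n := by
    rw [mul_pow]; field_simp
  rw [h3, div_le_iff₀ (by positivity)]
  calc (δ * |x|) ^ n ≤ (n.factorial : ℝ) * Real.exp (δ * |x|) := h2
    _ = (n.factorial : ℝ) / δ ^ n * Real.exp (δ * |x|) * δ ^ n := by field_simp

end AuxIneq

lemma uq_abs_pow_mul_exp_le {δ c : ℝ} (hδ : 0 < δ) (n : ℕ) (x : ℝ) :
    |x| ^ n * Real.exp (c * x) ≤
      (n.factorial / δ ^ n) * (Real.exp ((c + δ) * x) + Real.exp ((c - δ) * x)) := by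
  have hK : (0:ℝ) ≤ (n.factorial : ℝ) / δ ^ n := by positivity
  have h2 : Real.exp (δ * |x|) * Real.exp (c * x)
      ≤ Real.exp ((c + δ) * x) + Real.exp ((c - δ) * x) := by
    rw [← Real.exp_add]
    rcases le_or_gt 0 x with hx | hx
    · rw [abs_of_nonneg hx]
      exact le_add_of_le_of_nonneg (Real.exp_le_exp.2 (by ring_nf; exact le_rfl))
        (Real.exp_pos _).le
    · rw [abs_of_neg hx]
      exact le_add_of_nonneg_of_le (Real.exp_pos _).le
        (Real.exp_le_exp.2 (by ring_nf; exact le_rfl))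
  calc |x| ^ n * Real.exp (c * x)
      ≤ (n.factorial / δ ^ n) * Real.exp (δ * |x|) * Real.exp (c * x) :=
        mul_le_mul_of_nonneg_right (uq_abs_pow_le_exp hδ n x) (Real.exp_pos _).le
    _ = (n.factorial / δ ^ n) * (Real.exp (δ * |x|) * Real.exp (c * x)) := by ring
    _ ≤ _ := mul_le_mul_of_nonneg_left h2 hK

variable {Ω : Type*} [MeasurableSpace Ω] (P : Measure Ω) (g : Ω → ℝ)

lemma uq_integrable_exp_between {a b c : ℝ} (hg : Measurable g) (hac : a ≤ c) (hcb : c ≤ b)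
    (ha : Integrable (fun ω => Real.exp (a * g ω)) P)
    (hb : Integrable (fun ω => Real.exp (b * g ω)) P) :
    Integrable (fun ω => Real.exp (c * g ω)) P := by
  refine (ha.add hb).mono' ((hg.const_mul c).exp).aestronglyMeasurable
    (ae_of_all _ fun ω => ?_)
  rw [Real.norm_eq_abs, abs_of_nonneg (Real.exp_pos _).le]
  exact uq_exp_interval_le (g ω) hac hcb

lemma uq_integrable_abs_pow_mul_exp {a b c : ℝ} (n : ℕ) (hg : Measurable g)
    (hac : a < c) (hcb : c < b)
    (ha : Integrable (fun ω => Real.exp (a * g ω)) P)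
    (hb : Integrable (fun ω => Real.exp (b * g ω)) P) :
    Integrable (fun ω => |g ω| ^ n * Real.exp (c * g ω)) P := by
  set δ := min (c - a) (b - c) with hδdef
  have hδ : 0 < δ := lt_min (by linarith) (by linarith)
  have h1 : Integrable (fun ω => Real.exp ((c + δ) * g ω)) P :=
    uq_integrable_exp_between P g hg (by
      have := min_le_right (c - a) (b - c); nlinarith [hδ]) (by
      have := min_le_right (c - a) (b - c); linarith) ha hb
  have h2 : Integrable (fun ω => Real.exp ((c - δ) * g ω)) P :=
    uq_integrable_exp_between P g hg (by
      have := min_le_left (c - a) (b - c); linarith) (by linarith) ha hb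
  refine (((h1.add h2).const_mul ((n.factorial : ℝ) / δ ^ n))).mono'
    (((hg.abs.pow_const n).mul ((hg.const_mul c).exp)).aestronglyMeasurable)
    (ae_of_all _ fun ω => ?_)
  rw [Real.norm_eq_abs, abs_of_nonneg (by positivity)]
  exact uq_abs_pow_mul_exp_le hδ n (g ω)

section S
variable {Ω : Type*} [MeasurableSpace Ω] (P : Measure Ω) (g : Ω → ℝ)

lemma uq_integrable_pow_mul_exp {a b c : ℝ} (n : ℕ) (hg : Measurable g)
    (hac : a < c) (hcb : c < b)
    (ha : Integrable (fun ω => Real.exp (a * g ω)) P)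
    (hb : Integrable (fun ω => Real.exp (b * g ω)) P) :
    Integrable (fun ω => (g ω) ^ n * Real.exp (c * g ω)) P := by
  refine (uq_integrable_abs_pow_mul_exp P g n hg hac hcb ha hb).mono'
    (((hg.pow_const n).mul ((hg.const_mul c).exp)).aestronglyMeasurable)
    (ae_of_all _ fun ω => ?_)
  rw [Real.norm_eq_abs, abs_mul, abs_pow, abs_of_nonneg (Real.exp_pos _).le]

lemma uq_hasDerivAt_integral_pow {a b c : ℝ} (k : ℕ) (hg : Measurable g)
    (hac : a < c) (hcb : c < b)
    (ha : Integrable (fun ω => Real.exp (a * g ω)) P)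
    (hb : Integrable (fun ω => Real.exp (b * g ω)) P) :
    HasDerivAt (fun t => ∫ ω, (g ω) ^ k * Real.exp (t * g ω) ∂P)
      (∫ ω, (g ω) ^ (k + 1) * Real.exp (c * g ω) ∂P) c := by
  set ε := min (c - a) (b - c) / 2 with hεdef
  have hε : 0 < ε := by
    have h1 : 0 < c - a := by linarith
    have h2 : 0 < b - c := by linarith
    have := lt_min h1 h2
    positivity
  have haε : a < c - ε := by
    have := min_le_left (c - a) (b - c); simp only [hεdef] at *; linarith
  have hbε : c + ε < b := by
    have := min_le_right (c - a) (b - c); simp only [hεdef] at *; linarith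
  have key := hasDerivAt_integral_of_dominated_loc_of_deriv_le (μ := P)
    (F := fun t ω => (g ω) ^ k * Real.exp (t * g ω))
    (F' := fun t ω => (g ω) ^ (k + 1) * Real.exp (t * g ω))
    (x₀ := c)
    (bound := fun ω => |g ω| ^ (k + 1) * (Real.exp ((c - ε) * g ω) + Real.exp ((c + ε) * g ω)))
    (Metric.ball_mem_nhds c hε)
    (Eventually.of_forall fun t =>
      (((hg.pow_const k).mul ((hg.const_mul t).exp)).aestronglyMeasurable))
    (uq_integrable_pow_mul_exp P g k hg hac hcb ha hb)
    (((hg.pow_const (k + 1)).mul ((hg.const_mul c).exp)).aestronglyMeasurable)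
    (ae_of_all _ fun ω t ht => ?_) ?_ (ae_of_all _ fun ω t _ => ?_)
  · exact key.2
  · -- bound
    rw [Real.norm_eq_abs, abs_mul, abs_pow, abs_of_nonneg (Real.exp_pos _).le]
    refine mul_le_mul_of_nonneg_left ?_ (by positivity)
    rw [Metric.mem_ball, Real.dist_eq] at ht
    have h1 : c - ε ≤ t := by cases abs_lt.1 ht; linarith
    have h2 : t ≤ c + ε := by cases abs_lt.1 ht; linarith
    exact uq_exp_interval_le (g ω) h1 h2
  · -- bound integrable
    have h1 := uq_integrable_abs_pow_mul_exp P g (k + 1) hg haε (by linarith : c - ε < b) ha hb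
    have h2 := uq_integrable_abs_pow_mul_exp P g (k + 1) hg (by linarith : a < c + ε) hbε ha hb
    refine (h1.add h2).congr (ae_of_all _ fun ω => ?_)
    simp [mul_add]
  · -- differentiability
    have h := (((hasDerivAt_mul_const (g ω)).exp).const_mul ((g ω) ^ k) :
      HasDerivAt (fun t : ℝ => (g ω) ^ k * Real.exp (t * g ω))
        ((g ω) ^ k * (Real.exp (t * g ω) * g ω)) t)
    have heq : (g ω) ^ (k + 1) * Real.exp (t * g ω)
        = (g ω) ^ k * (Real.exp (t * g ω) * g ω) := by ring
    simpa only [heq] using h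
end S

section S
variable {Ω : Type*} [MeasurableSpace Ω] (P : Measure Ω) (g : Ω → ℝ)

noncomputable def M0 (c : ℝ) : ℝ := ∫ ω, Real.exp (c * g ω) ∂P
noncomputable def M1 (c : ℝ) : ℝ := ∫ ω, g ω * Real.exp (c * g ω) ∂P
noncomputable def M2 (c : ℝ) : ℝ := ∫ ω, (g ω) ^ 2 * Real.exp (c * g ω) ∂P
noncomputable def Lg (c : ℝ) : ℝ := M1 P g c / M0 P g c
noncomputable def Hg (c : ℝ) : ℝ := c * Lg P g c - Real.log (M0 P g c)

def Int2 (c : ℝ) : Prop :=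
  ∃ a b : ℝ, a < c ∧ c < b ∧ Integrable (fun ω => Real.exp (a * g ω)) P ∧
    Integrable (fun ω => Real.exp (b * g ω)) P

variable [IsProbabilityMeasure P]

lemma uq_M0_pos {c : ℝ} (hc : Integrable (fun ω => Real.exp (c * g ω)) P) :
    0 < M0 P g c := integral_exp_pos hc

end S

section S2
variable {Ω : Type*} [MeasurableSpace Ω] (P : Measure Ω) (g : Ω → ℝ)

lemma Int2.integrable {c : ℝ} (hg : Measurable g) (h : Int2 P g c) :
    Integrable (fun ω => Real.exp (c * g ω)) P := by
  obtain ⟨a, b, hac, hcb, ha, hb⟩ := h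
  exact uq_integrable_exp_between P g hg hac.le hcb.le ha hb

lemma Int2.integrable_pow {c : ℝ} (n : ℕ) (hg : Measurable g) (h : Int2 P g c) :
    Integrable (fun ω => (g ω) ^ n * Real.exp (c * g ω)) P := by
  obtain ⟨a, b, hac, hcb, ha, hb⟩ := h
  exact uq_integrable_pow_mul_exp P g n hg hac hcb ha hb

variable [IsProbabilityMeasure P]

/-- transfer of integrability to the tilted measure -/
lemma uq_tilt_integrable {c : ℝ} {φ : Ω → ℝ} (hg : Measurable g)
    (hc : Integrable (fun ω => Real.exp (c * g ω)) P)
    (h : Integrable (fun ω => φ ω * Real.exp (c * g ω)) P) :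
    Integrable φ (P.tilted (fun ω => c * g ω)) := by
  have hM : 0 < M0 P g c := uq_M0_pos P g hc
  rw [Measure.tilted, integrable_withDensity_iff
    (((hg.const_mul c).exp.div_const _).ennreal_ofReal)
    (ae_of_all _ fun ω => ENNReal.ofReal_lt_top)]
  have heq : (fun ω => φ ω * (ENNReal.ofReal
        (Real.exp (c * g ω) / ∫ x, Real.exp (c * g x) ∂P)).toReal)
      = fun ω => (φ ω * Real.exp (c * g ω)) * (M0 P g c)⁻¹ := by
    funext ω
    rw [ENNReal.toReal_ofReal (by positivity)]
    show φ ω * (Real.exp (c * g ω) / M0 P g c) = _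
    field_simp
  rw [heq]
  exact h.mul_const _

lemma uq_tilt_integral {c : ℝ} {φ : Ω → ℝ}
    (hc : Integrable (fun ω => Real.exp (c * g ω)) P) :
    ∫ ω, φ ω ∂(P.tilted (fun ω => c * g ω))
      = (∫ ω, φ ω * Real.exp (c * g ω) ∂P) / M0 P g c := by
  have hM : 0 < M0 P g c := uq_M0_pos P g hc
  rw [integral_tilted]
  have heq : (fun ω => (Real.exp (c * g ω) / ∫ x, Real.exp (c * g x) ∂P) • φ ω)
      = fun ω => (φ ω * Real.exp (c * g ω)) * (M0 P g c)⁻¹ := by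
    funext ω
    show (Real.exp (c * g ω) / M0 P g c) * φ ω = _
    field_simp
  rw [heq, integral_mul_const, div_eq_mul_inv]

lemma uq_tilt_integral_g {c : ℝ} (hg : Measurable g) (h : Int2 P g c) :
    ∫ ω, g ω ∂(P.tilted (fun ω => c * g ω)) = Lg P g c := by
  have := uq_tilt_integral P g (φ := g) (h.integrable P g hg)
  rw [this]; rfl

lemma uq_tilt_integrable_g {c : ℝ} (hg : Measurable g) (h : Int2 P g c) :
    Integrable g (P.tilted (fun ω => c * g ω)) := by
  refine uq_tilt_integrable P g hg (h.integrable P g hg) ?_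
  simpa [pow_one] using h.integrable_pow P g 1 hg

end S2

section S3
set_option linter.unusedSectionVars false
variable {Ω : Type*} [MeasurableSpace Ω] (P : Measure Ω) (g : Ω → ℝ)

variable [IsProbabilityMeasure P]

lemma Int2.hasDerivAt_M0 {c : ℝ} (hg : Measurable g) (h : Int2 P g c) :
    HasDerivAt (M0 P g) (M1 P g c) c := by
  obtain ⟨a, b, hac, hcb, ha, hb⟩ := h
  have := uq_hasDerivAt_integral_pow P g 0 hg hac hcb ha hb
  unfold M0 M1
  simpa only [pow_zero, one_mul, zero_add, pow_one] using this

lemma Int2.hasDerivAt_M1 {c : ℝ} (hg : Measurable g) (h : Int2 P g c) :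
    HasDerivAt (M1 P g) (M2 P g c) c := by
  obtain ⟨a, b, hac, hcb, ha, hb⟩ := h
  have := uq_hasDerivAt_integral_pow P g 1 hg hac hcb ha hb
  unfold M1 M2
  simpa only [pow_one, one_add_one_eq_two] using this

lemma Int2.hasDerivAt_logM0 {c : ℝ} (hg : Measurable g) (h : Int2 P g c) :
    HasDerivAt (fun t => Real.log (M0 P g t)) (Lg P g c) c :=
  (h.hasDerivAt_M0 P g hg).log (uq_M0_pos P g (h.integrable P g hg)).ne'

lemma Int2.hasDerivAt_Lg {c : ℝ} (hg : Measurable g) (h : Int2 P g c) :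
    HasDerivAt (Lg P g)
      ((M2 P g c * M0 P g c - M1 P g c * M1 P g c) / (M0 P g c) ^ 2) c :=
  (h.hasDerivAt_M1 P g hg).div (h.hasDerivAt_M0 P g hg)
    (uq_M0_pos P g (h.integrable P g hg)).ne'

lemma Int2.hasDerivAt_Hg {c : ℝ} (hg : Measurable g) (h : Int2 P g c) :
    HasDerivAt (Hg P g)
      (c * ((M2 P g c * M0 P g c - M1 P g c * M1 P g c) / (M0 P g c) ^ 2)) c := by
  have h1 := ((hasDerivAt_id c).mul (h.hasDerivAt_Lg P g hg)).sub
    (h.hasDerivAt_logM0 P g hg)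
  have heq : 1 * Lg P g c + c * ((M2 P g c * M0 P g c - M1 P g c * M1 P g c) / (M0 P g c) ^ 2)
      - Lg P g c = c * ((M2 P g c * M0 P g c - M1 P g c * M1 P g c) / (M0 P g c) ^ 2) := by
    ring
  rw [← heq]; exact h1

lemma uq_var_eq {c : ℝ} (hg : Measurable g) (h : Int2 P g c) :
    ∫ ω, (g ω - Lg P g c) ^ 2 ∂(P.tilted (fun ω => c * g ω))
      = (M2 P g c * M0 P g c - M1 P g c * M1 P g c) / (M0 P g c) ^ 2 := by
  have hM : 0 < M0 P g c := uq_M0_pos P g (h.integrable P g hg)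
  have hint : Integrable (fun ω => (g ω - Lg P g c) ^ 2 * Real.exp (c * g ω)) P := by
    have h2 := h.integrable_pow P g 2 hg
    have h1 := h.integrable_pow P g 1 hg
    have h0 := h.integrable P g hg
    have heq : (fun ω => (g ω - Lg P g c) ^ 2 * Real.exp (c * g ω))
        = fun ω => ((g ω) ^ 2 * Real.exp (c * g ω))
          - (2 * Lg P g c) * ((g ω) ^ 1 * Real.exp (c * g ω))
          + (Lg P g c) ^ 2 * Real.exp (c * g ω) := by
      funext ω; ring
    rw [heq]
    exact (h2.sub (h1.const_mul _)).add (h0.const_mul _)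
  rw [uq_tilt_integral P g (h.integrable P g hg)]
  have h2 := h.integrable_pow P g 2 hg
  have h1 := h.integrable_pow P g 1 hg
  have h0 := h.integrable P g hg
  have hexp : ∫ ω, (g ω - Lg P g c) ^ 2 * Real.exp (c * g ω) ∂P
      = M2 P g c - 2 * Lg P g c * M1 P g c + (Lg P g c) ^ 2 * M0 P g c := by
    have heq : (fun ω => (g ω - Lg P g c) ^ 2 * Real.exp (c * g ω))
        = fun ω => ((g ω) ^ 2 * Real.exp (c * g ω))
          - (2 * Lg P g c) * ((g ω) ^ 1 * Real.exp (c * g ω))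
          + (Lg P g c) ^ 2 * Real.exp (c * g ω) := by
      funext ω; ring
    have hAB : Integrable (fun ω => (g ω) ^ 2 * Real.exp (c * g ω)
        - 2 * Lg P g c * ((g ω) ^ 1 * Real.exp (c * g ω))) P := by
      exact h2.sub (h1.const_mul _)
    have hC : Integrable (fun ω => (Lg P g c) ^ 2 * Real.exp (c * g ω)) P := by
      exact h0.const_mul _
    rw [heq, integral_add hAB hC, integral_sub h2 (h1.const_mul _),
      integral_const_mul, integral_const_mul]
    simp only [pow_one, M0, M1, M2]
  rw [hexp]
  have hL : Lg P g c = M1 P g c / M0 P g c := rfl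
  rw [hL]
  field_simp
  ring

lemma uq_var_pos {c : ℝ} (hg : Measurable g) (h : Int2 P g c)
    (hg0 : ∫ ω, g ω ∂P = 0) (hgne : ¬ (g =ᵐ[P] fun _ => (0:ℝ))) :
    0 < (M2 P g c * M0 P g c - M1 P g c * M1 P g c) / (M0 P g c) ^ 2 := by
  rw [← uq_var_eq P g hg h]
  set T := P.tilted (fun ω => c * g ω) with hT
  have hci := h.integrable P g hg
  haveI : IsProbabilityMeasure T := isProbabilityMeasure_tilted hci
  have hsqint : Integrable (fun ω => (g ω - Lg P g c) ^ 2) T := by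
    refine uq_tilt_integrable P g hg hci ?_
    have h2 := h.integrable_pow P g 2 hg
    have h1 := h.integrable_pow P g 1 hg
    have h0 := h.integrable P g hg
    have heq : (fun ω => (g ω - Lg P g c) ^ 2 * Real.exp (c * g ω))
        = fun ω => ((g ω) ^ 2 * Real.exp (c * g ω))
          - (2 * Lg P g c) * ((g ω) ^ 1 * Real.exp (c * g ω))
          + (Lg P g c) ^ 2 * Real.exp (c * g ω) := by
      funext ω; ring
    rw [heq]
    exact (h2.sub (h1.const_mul _)).add (h0.const_mul _)
  have hnonneg : 0 ≤ ∫ ω, (g ω - Lg P g c) ^ 2 ∂T :=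
    integral_nonneg fun ω => by positivity
  rcases hnonneg.lt_or_eq with hpos | hzero
  · exact hpos
  · exfalso
    have hae : (fun ω => (g ω - Lg P g c) ^ 2) =ᵐ[T] 0 :=
      (integral_eq_zero_iff_of_nonneg (fun ω => by positivity) hsqint).1 hzero.symm
    have haeg : g =ᵐ[T] fun _ => Lg P g c := by
      filter_upwards [hae] with ω hω
      have := pow_eq_zero_iff (n := 2) (by norm_num) |>.1 hω
      linarith [sub_eq_zero.1 this]
    have haegP : g =ᵐ[P] fun _ => Lg P g c :=
      (absolutelyContinuous_tilted hci).ae_le haeg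
    have : ∫ ω, g ω ∂P = Lg P g c := by
      rw [integral_congr_ae haegP]; simp
    rw [hg0] at this
    exact hgne (by filter_upwards [haegP] with ω hω; rw [hω, ← this])
end S3

section S4
set_option linter.unusedSectionVars false
variable {Ω : Type*} [MeasurableSpace Ω] (P : Measure Ω) (g : Ω → ℝ)
variable [IsProbabilityMeasure P]

lemma uq_llr_tilt_eq {c : ℝ} (hg : Measurable g) (h : Int2 P g c) :
    llr (P.tilted (fun ω => c * g ω)) P =ᵐ[P] fun ω => c * g ω - Real.log (M0 P g c) := by
  have hci := h.integrable P g hg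
  have h1 := llr_tilted_left (μ := P) (ν := P) (f := fun ω => c * g ω)
    Measure.AbsolutelyContinuous.rfl hci ((hg.const_mul c).aemeasurable)
  have h2 : llr P P =ᵐ[P] fun _ => (0:ℝ) := by
    filter_upwards [Measure.rnDeriv_self P] with ω hω
    simp [llr, hω]
  filter_upwards [h1, h2] with ω hω1 hω2
  rw [hω1, hω2]
  simp [M0]

lemma uq_klDiv_tilt {c : ℝ} (hg : Measurable g) (h : Int2 P g c) :
    klDiv (P.tilted (fun ω => c * g ω)) P = ((Hg P g c : ℝ) : EReal) := by
  have hci := h.integrable P g hg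
  set T := P.tilted (fun ω => c * g ω) with hT
  have hTP : T ≪ P := tilted_absolutelyContinuous P _
  have heqT : llr T P =ᵐ[T] fun ω => c * g ω - Real.log (M0 P g c) :=
    hTP.ae_le (uq_llr_tilt_eq P g hg h)
  haveI : IsProbabilityMeasure T := isProbabilityMeasure_tilted hci
  have hgT : Integrable g T := uq_tilt_integrable_g P g hg h
  have hint : Integrable (llr T P) T := by
    rw [integrable_congr heqT]
    exact (hgT.const_mul c).sub (integrable_const _)
  have hval : ∫ ω, llr T P ω ∂T = Hg P g c := by
    rw [integral_congr_ae heqT, integral_sub (hgT.const_mul c) (integrable_const _),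
      integral_const_mul, uq_tilt_integral_g P g hg h]
    simp [Hg]
  rw [klDiv, if_pos ⟨hTP, hint⟩, hval]

lemma uq_gibbs (hg : Measurable g) (Q : Measure Ω) [IsProbabilityMeasure Q]
    (hQP : Q ≪ P) (hllr : Integrable (llr Q P) Q) (hgQ : Integrable g Q)
    {c : ℝ} (hci : Integrable (fun ω => Real.exp (c * g ω)) P) :
    c * ∫ ω, g ω ∂Q ≤ Real.log (M0 P g c) + ∫ ω, llr Q P ω ∂Q := by
  have hM : 0 < M0 P g c := uq_M0_pos P g hci
  set ρ := Q.rnDeriv P with hρ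
  set u : Ω → ℝ := fun ω => Real.exp (c * g ω) * ((ρ ω).toReal)⁻¹ with hu
  have humeas : Measurable u :=
    ((hg.const_mul c).exp).mul ((Measure.measurable_rnDeriv Q P).ennreal_toReal.inv)
  have hunn : ∀ ω, 0 ≤ u ω := fun ω => by positivity
  -- lintegral bound
  have hlint : ∫⁻ ω, ENNReal.ofReal (u ω) ∂Q ≤ ENNReal.ofReal (M0 P g c) := by
    have hrw : ∫⁻ ω, ENNReal.ofReal (u ω) ∂Q
        = ∫⁻ ω, ρ ω * ENNReal.ofReal (u ω) ∂P :=
      (lintegral_rnDeriv_mul hQP (humeas.ennreal_ofReal.aemeasurable)).symm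
    rw [hrw]
    have hle : ∀ᵐ ω ∂P, ρ ω * ENNReal.ofReal (u ω)
        ≤ ENNReal.ofReal (Real.exp (c * g ω)) := by
      filter_upwards [Measure.rnDeriv_lt_top Q P] with ω hlt
      by_cases h0 : ρ ω = 0
      · simp [h0]
      · rw [hu]
        simp only
        rw [ENNReal.ofReal_mul (Real.exp_pos _).le, ← ENNReal.toReal_inv,
          ENNReal.ofReal_toReal (ENNReal.inv_ne_top.2 h0)]
        rw [mul_comm (ρ ω), mul_assoc, ENNReal.inv_mul_cancel h0 hlt.ne, mul_one]
    calc ∫⁻ ω, ρ ω * ENNReal.ofReal (u ω) ∂P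
        ≤ ∫⁻ ω, ENNReal.ofReal (Real.exp (c * g ω)) ∂P := lintegral_mono_ae hle
      _ = ENNReal.ofReal (M0 P g c) :=
          (ofReal_integral_eq_lintegral_ofReal hci
            (ae_of_all _ fun ω => (Real.exp_pos _).le)).symm
  -- integrability of u
  have huint : Integrable u Q := by
    refine ⟨humeas.aestronglyMeasurable, ?_⟩
    rw [hasFiniteIntegral_iff_ofReal (ae_of_all _ hunn)]
    exact lt_of_le_of_lt hlint ENNReal.ofReal_lt_top
  -- integral of u bounded
  have huval : ∫ ω, u ω ∂Q ≤ M0 P g c := by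
    rw [integral_eq_lintegral_of_nonneg_ae (ae_of_all _ hunn) humeas.aestronglyMeasurable]
    calc (∫⁻ ω, ENNReal.ofReal (u ω) ∂Q).toReal
        ≤ (ENNReal.ofReal (M0 P g c)).toReal :=
          ENNReal.toReal_mono ENNReal.ofReal_ne_top hlint
      _ = M0 P g c := ENNReal.toReal_ofReal hM.le
  -- pointwise inequality
  have hptwise : ∀ᵐ ω ∂Q, c * g ω - llr Q P ω ≤ u ω / M0 P g c - 1 + Real.log (M0 P g c) := by
    filter_upwards [Measure.rnDeriv_pos hQP, hQP.ae_le (Measure.rnDeriv_lt_top Q P)]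
      with ω h0 hlt
    have ht : 0 < (ρ ω).toReal := ENNReal.toReal_pos h0.ne' hlt.ne
    have hupos : 0 < u ω := by
      rw [hu]; positivity
    have hlogu : Real.log (u ω) = c * g ω - llr Q P ω := by
      rw [hu]
      simp only
      rw [Real.log_mul (Real.exp_pos _).ne' (inv_ne_zero ht.ne'), Real.log_exp,
        Real.log_inv, llr]
      ring
    have hkey : Real.log (u ω / M0 P g c) ≤ u ω / M0 P g c - 1 :=
      Real.log_le_sub_one_of_pos (by positivity)
    rw [Real.log_div hupos.ne' hM.ne'] at hkey
    linarith [hlogu ▸ hkey]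
  -- integrate
  have hlhs : Integrable (fun ω => c * g ω - llr Q P ω) Q := (hgQ.const_mul c).sub hllr
  have hrhs : Integrable (fun ω => u ω / M0 P g c - 1 + Real.log (M0 P g c)) Q := by
    exact ((huint.div_const _).sub (integrable_const _)).add (integrable_const _)
  have hmono := integral_mono_ae hlhs hrhs hptwise
  rw [integral_sub (hgQ.const_mul c) hllr, integral_const_mul] at hmono
  have hrhsval : ∫ ω, (u ω / M0 P g c - 1 + Real.log (M0 P g c)) ∂Q
      ≤ Real.log (M0 P g c) := by
    have h1 : Integrable (fun ω => u ω / M0 P g c - 1) Q :=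
      (huint.div_const _).sub (integrable_const _)
    rw [integral_add h1 (integrable_const _), integral_sub (huint.div_const _)
      (integrable_const _), integral_div (M0 P g c) u]
    simp only [integral_const, measure_univ, probReal_univ, ENNReal.toReal_one, smul_eq_mul, one_mul]
    have : (∫ ω, u ω ∂Q) / M0 P g c ≤ 1 := by
      rw [div_le_one hM]; exact huval
    linarith
  linarith
end S4


section S5
set_option linter.unusedSectionVars false
variable {Ω : Type*} [MeasurableSpace Ω] (P : Measure Ω) (g : Ω → ℝ)
variable [IsProbabilityMeasure P]

lemma uq_tilt_llr_integrable {c : ℝ} (hg : Measurable g) (h : Int2 P g c) :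
    Integrable (llr (P.tilted (fun ω => c * g ω)) P) (P.tilted (fun ω => c * g ω)) := by
  have hci := h.integrable P g hg
  haveI : IsProbabilityMeasure (P.tilted (fun ω => c * g ω)) := isProbabilityMeasure_tilted hci
  have heqT := (tilted_absolutelyContinuous P (fun ω => c * g ω)).ae_le (uq_llr_tilt_eq P g hg h)
  rw [integrable_congr heqT]
  exact ((uq_tilt_integrable_g P g hg h).const_mul c).sub (integrable_const _)

lemma uq_tilt_llr_integral {c : ℝ} (hg : Measurable g) (h : Int2 P g c) :
    ∫ ω, llr (P.tilted (fun ω => c * g ω)) P ω ∂(P.tilted (fun ω => c * g ω)) = Hg P g c := by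
  have hci := h.integrable P g hg
  haveI : IsProbabilityMeasure (P.tilted (fun ω => c * g ω)) := isProbabilityMeasure_tilted hci
  have heqT := (tilted_absolutelyContinuous P (fun ω => c * g ω)).ae_le (uq_llr_tilt_eq P g hg h)
  rw [integral_congr_ae heqT,
    integral_sub ((uq_tilt_integrable_g P g hg h).const_mul c) (integrable_const _),
    integral_const_mul, uq_tilt_integral_g P g hg h]
  simp [Hg]

end S5

lemma uq_main_side {Ω : Type*} [MeasurableSpace Ω] (P : Measure Ω) [IsProbabilityMeasure P]
    (g : Ω → ℝ) (hg : Measurable g)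
    (hg0 : ∫ ω, g ω ∂P = 0) (hgne : ¬ (g =ᵐ[P] fun _ => (0:ℝ)))
    (hnbhd : ∃ ε > (0:ℝ), ∀ c : ℝ, |c| < ε → Integrable (fun ω => Real.exp (c * g ω)) P)
    (Λg : ℝ → ℝ) (hΛg : Λg = fun c => Real.log (∫ ω, Real.exp (c * g ω) ∂P))
    (d : EReal) (hd : d = sSup {x : EReal | ∃ c : ℝ, 0 < c ∧
      Integrable (fun ω => Real.exp (c * g ω)) P ∧ x = (c : EReal)})
    (ηp : EReal)
    (hηp : Tendsto (fun c : ℝ => ((c * deriv Λg c - Λg c : ℝ) : EReal))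
      (comap (fun c : ℝ => (c : EReal)) (nhdsWithin d (Set.Iio d))) (nhds ηp))
    (η : ℝ) (hη0 : 0 < η) (hη : (η : EReal) < ηp) :
    ∃ cp : ℝ, 0 < cp ∧ (cp : EReal) < d ∧
      klDiv (P.tilted (fun ω => cp * g ω)) P = ((η : ℝ) : EReal) ∧
      (∀ c' : ℝ, 0 < c' → (c' : EReal) < d →
        klDiv (P.tilted (fun ω => c' * g ω)) P = ((η : ℝ) : EReal) → c' = cp) ∧
      Integrable (fun ω => Real.exp (cp * g ω)) P ∧
      Integrable g (P.tilted (fun ω => cp * g ω)) ∧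
      IsGreatest {r : ℝ | ∃ Q : Measure Ω, IsProbabilityMeasure Q ∧ Q ≪ P ∧
          Integrable g Q ∧ klDiv Q P ≤ ((η : ℝ) : EReal) ∧ r = ∫ x, g x ∂Q}
        (∫ x, g x ∂(P.tilted (fun ω => cp * g ω))) ∧
      ((∫ x, g x ∂(P.tilted (fun ω => cp * g ω)) : ℝ) : EReal)
        = ⨅ c ∈ Set.Ioi (0 : ℝ), uqObj P g η c := by
  subst hΛg
  obtain ⟨ε, hε, hint⟩ := hnbhd
  have hIa : Integrable (fun ω => Real.exp ((-(ε/2)) * g ω)) P := by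
    refine hint _ ?_
    rw [abs_neg, abs_of_pos (by linarith)]; linarith
  have hIb0 : Integrable (fun ω => Real.exp ((ε/2) * g ω)) P := by
    refine hint _ ?_
    rw [abs_of_pos (by linarith)]; linarith
  have hdge : ((ε/2 : ℝ) : EReal) ≤ d := by
    rw [hd]; exact le_sSup ⟨ε/2, by linarith, hIb0, rfl⟩
  have hd0 : (0 : EReal) < d := by
    refine lt_of_lt_of_le ?_ hdge
    exact_mod_cast half_pos hε
  have hlt : ∀ c : ℝ, (c : EReal) < d →
      ∃ b : ℝ, c < b ∧ 0 < b ∧ Integrable (fun ω => Real.exp (b * g ω)) P := by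
    intro c hc
    rw [hd, lt_sSup_iff] at hc
    obtain ⟨x, hxS, hcx⟩ := hc
    obtain ⟨b, hb0, hbint, rfl⟩ := hxS
    exact ⟨b, by exact_mod_cast hcx, hb0, hbint⟩
  have hInt2 : ∀ c : ℝ, 0 ≤ c → (c : EReal) < d → Int2 P g c := by
    intro c h0 hcd
    obtain ⟨b, hcb, hb0, hbint⟩ := hlt c hcd
    exact ⟨-(ε/2), b, by linarith, hcb, hIa, hbint⟩
  have hderiv : ∀ c : ℝ, Int2 P g c →
      deriv (fun c => Real.log (∫ ω, Real.exp (c * g ω) ∂P)) c = Lg P g c := by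
    intro c h
    exact HasDerivAt.deriv (by exact h.hasDerivAt_logM0 P g hg)
  -- filter nontriviality
  set F := comap (fun c : ℝ => (c : EReal)) (nhdsWithin d (Set.Iio d)) with hF
  haveI hFne : F.NeBot := by
    refine Filter.comap_neBot fun S hS => ?_
    rw [mem_nhdsWithin] at hS
    obtain ⟨U, hUopen, hdU, hUsub⟩ := hS
    obtain ⟨l, hld, hIoc⟩ := exists_Ioc_subset_of_mem_nhds (hUopen.mem_nhds hdU) ⟨⊥, bot_lt_iff_ne_bot.2 (by rintro rfl; exact absurd hd0 (by simp))⟩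
    have hwd : max l 0 < d := max_lt hld hd0
    obtain ⟨z, hwz, hzd⟩ := exists_between hwd
    have hzt : z ≠ ⊤ := (hzd.trans_le le_top).ne
    have h0z : (0:EReal) < z := lt_of_le_of_lt (le_max_right l 0) hwz
    have hzb : z ≠ ⊥ := ((EReal.bot_lt_zero).trans h0z).ne'
    refine ⟨z.toReal, hUsub ⟨hIoc ⟨?_, ?_⟩, ?_⟩⟩
    · rw [EReal.coe_toReal hzt hzb]
      exact lt_of_le_of_lt (le_max_left l 0) hwz
    · rw [EReal.coe_toReal hzt hzb]; exact hzd.le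
    · rw [EReal.coe_toReal hzt hzb]; exact hzd
  have hev1 : ∀ᶠ c in F, (η : EReal)
      < ((c * deriv (fun c => Real.log (∫ ω, Real.exp (c * g ω) ∂P)) c
          - Real.log (∫ ω, Real.exp (c * g ω) ∂P) : ℝ) : EReal) :=
    hηp.eventually_const_lt hη
  have hev2 : ∀ᶠ (c : ℝ) in F, 0 < c ∧ ((c : ℝ) : EReal) < d := by
    have hU : (Set.Ioi (0:EReal)) ∩ (Set.Iio d) ∈ nhdsWithin d (Set.Iio d) :=
      inter_mem (mem_nhdsWithin_of_mem_nhds (isOpen_Ioi.mem_nhds hd0)) self_mem_nhdsWithin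
    filter_upwards [preimage_mem_comap hU] with c hc
    refine ⟨?_, hc.2⟩
    have h1 : (0 : EReal) < ((c : ℝ) : EReal) := hc.1
    exact_mod_cast h1
  obtain ⟨b₀, hb₀gt, hb₀pos, hb₀d⟩ := (hev1.and hev2).exists
  have hb₀Int2 : Int2 P g b₀ := hInt2 b₀ hb₀pos.le hb₀d
  have hHb₀ : η < Hg P g b₀ := by
    have heq : (b₀ * deriv (fun c => Real.log (∫ ω, Real.exp (c * g ω) ∂P)) b₀
        - Real.log (∫ ω, Real.exp (b₀ * g ω) ∂P) : ℝ) = Hg P g b₀ := by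
      rw [hderiv b₀ hb₀Int2]; rfl
    rw [heq] at hb₀gt
    exact_mod_cast hb₀gt
  have hIcc : ∀ b : ℝ, (b : EReal) < d → ∀ x ∈ Set.Icc (0:ℝ) b, Int2 P g x := by
    intro b hbd x hx
    exact hInt2 x hx.1 (lt_of_le_of_lt (by exact_mod_cast hx.2) hbd)
  have hcont : ∀ b : ℝ, (b : EReal) < d → ContinuousOn (Hg P g) (Set.Icc 0 b) := by
    intro b hbd x hx
    exact ((hIcc b hbd x hx).hasDerivAt_Hg P g hg).continuousAt.continuousWithinAt
  have hmono : ∀ b : ℝ, (b : EReal) < d → StrictMonoOn (Hg P g) (Set.Icc 0 b) := by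
    intro b hbd
    refine strictMonoOn_of_deriv_pos (convex_Icc 0 b) (hcont b hbd) ?_
    intro x hx
    rw [interior_Icc] at hx
    have hxI : Int2 P g x := hIcc b hbd x ⟨hx.1.le, hx.2.le⟩
    rw [(hxI.hasDerivAt_Hg P g hg).deriv]
    exact mul_pos hx.1 (uq_var_pos P g hg hxI hg0 hgne)
  have hH0 : Hg P g 0 = 0 := by
    have hM0 : M0 P g 0 = 1 := by
      simp [M0]
    simp [Hg, hM0]
  obtain ⟨cp, hcpIoo, hcpη⟩ := intermediate_value_Ioo (le_of_lt hb₀pos) (hcont b₀ hb₀d)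
    (show η ∈ Set.Ioo (Hg P g 0) (Hg P g b₀) from ⟨by rw [hH0]; exact hη0, hHb₀⟩)
  have hcp0 : 0 < cp := hcpIoo.1
  have hcpd : (cp : EReal) < d := lt_trans (by exact_mod_cast hcpIoo.2) hb₀d
  have hcpInt2 : Int2 P g cp := hInt2 cp hcp0.le hcpd
  have hvalT : ∫ x, g x ∂(P.tilted fun ω => cp * g ω) = Lg P g cp :=
    uq_tilt_integral_g P g hg hcpInt2
  have hHLg : Real.log (M0 P g cp) + η = cp * Lg P g cp := by
    rw [← hcpη]; simp [Hg]
  refine ⟨cp, hcp0, hcpd, ?_, ?_, hcpInt2.integrable P g hg, uq_tilt_integrable_g P g hg hcpInt2, ⟨?_, ?_⟩, ?_⟩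
  · rw [uq_klDiv_tilt P g hg hcpInt2, hcpη]
  · -- uniqueness
    intro c' hc'0 hc'd hklc'
    have hc'Int2 := hInt2 c' hc'0.le hc'd
    have hHc' : Hg P g c' = η := by
      rw [uq_klDiv_tilt P g hg hc'Int2] at hklc'
      exact_mod_cast hklc'
    have hbd : ((max c' cp : ℝ) : EReal) < d := by
      rcases max_choice c' cp with h | h <;> rw [h] <;> assumption
    exact (hmono _ hbd).injOn ⟨hc'0.le, le_max_left _ _⟩ ⟨hcp0.le, le_max_right _ _⟩
      (by rw [hHc', hcpη])
  · -- membership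
    exact ⟨P.tilted (fun ω => cp * g ω), isProbabilityMeasure_tilted (hcpInt2.integrable P g hg),
      tilted_absolutelyContinuous P _, uq_tilt_integrable_g P g hg hcpInt2,
      le_of_eq (by rw [uq_klDiv_tilt P g hg hcpInt2, hcpη]), rfl⟩
  · -- upper bound
    rintro r ⟨Q, hQprob, hQP, hgQ, hQkl, rfl⟩
    haveI := hQprob
    have hcond : Q ≪ P ∧ Integrable (llr Q P) Q := by
      by_contra hc
      rw [klDiv, if_neg hc, top_le_iff] at hQkl
      exact EReal.coe_ne_top η hQkl
    have hklval : ∫ ω, llr Q P ω ∂Q ≤ η := by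
      rw [klDiv, if_pos hcond] at hQkl
      exact_mod_cast hQkl
    have hgibbs := uq_gibbs P g hg Q hcond.1 hcond.2 hgQ (hcpInt2.integrable P g hg)
    rw [hvalT]
    have hmul : cp * ∫ ω, g ω ∂Q ≤ cp * Lg P g cp := by linarith
    exact (mul_le_mul_iff_right₀ hcp0).1 hmul
  · -- infimum formula
    rw [hvalT]
    apply le_antisymm
    · refine le_iInf₂ fun c hc => ?_
      rw [uqObj]
      split_ifs with hci
      · rw [EReal.coe_le_coe_iff]
        have hc0 : (0:ℝ) < c := hc
        set T := P.tilted fun ω => cp * g ω with hT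
        haveI : IsProbabilityMeasure T := isProbabilityMeasure_tilted (hcpInt2.integrable P g hg)
        have hgibbs := uq_gibbs P g hg T (tilted_absolutelyContinuous P _)
          (uq_tilt_llr_integrable P g hg hcpInt2) (uq_tilt_integrable_g P g hg hcpInt2) hci
        rw [uq_tilt_llr_integral P g hg hcpInt2, hcpη] at hgibbs
        rw [hvalT] at hgibbs
        have hcomm : c * Lg P g cp = Lg P g cp * c := mul_comm _ _
        have h2 : Lg P g cp ≤ (Real.log (M0 P g c) + η) / c := by
          rw [le_div_iff₀ hc0]; linarith
        have h3 : (1 / c) * Real.log (M0 P g c) + η / c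
            = (Real.log (M0 P g c) + η) / c := by ring
        show Lg P g cp ≤ (1 / c) * Real.log (M0 P g c) + η / c
        rw [h3]; exact h2
      · exact le_top
    · refine le_trans (iInf₂_le cp (Set.mem_Ioi.2 hcp0)) (le_of_eq ?_)
      rw [uqObj, if_pos (hcpInt2.integrable P g hg)]
      have : (1 / cp) * Real.log (M0 P g cp) + η / cp = Lg P g cp := by
        field_simp
        linarith [hHLg]
      exact_mod_cast congrArg (fun x : ℝ => (x : EReal)) this


end UQAux

/-- **Theorem 2.1(a) (measure-theoretic form)**: for `0 < η < η₊`, the supremum of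
`E_Q[f] − E_P[f]` over probability measures `Q ≪ P` with `kl(Q‖P) ≤ η` equals
`inf_{c>0}[(1/c) log E_P[e^{c f̄}] + η/c]` and is attained at the exponential tilt
`P_{c₊}` with `c₊ ∈ (0, d₊)` the unique parameter with `kl(P_{c₊}‖P) = η`; analogously
the infimum equals `−inf_{c>0}[(1/c) log E_P[e^{−c f̄}] + η/c]` and is attained at an
exponential tilt with negative parameter. -/
theorem model_uncertainty_indices_tight {Ω : Type*} [MeasurableSpace Ω]
    (P : Measure Ω) [IsProbabilityMeasure P]
    (f : Ω → ℝ) (hf : Measurable f) (hfP : Integrable f P)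
    (hnconst : ¬ ∀ᵐ ω ∂P, f ω = ∫ x, f x ∂P)
    (fbar : Ω → ℝ) (hfbar : fbar = fun ω => f ω - ∫ x, f x ∂P)
    (hnbhd : ∃ ε > (0 : ℝ), ∀ c : ℝ, |c| < ε →
      Integrable (fun ω => Real.exp (c * fbar ω)) P)
    (ΛF ΛM : ℝ → ℝ)
    (hΛF : ΛF = fun c => Real.log (∫ ω, Real.exp (c * fbar ω) ∂P))
    (hΛM : ΛM = fun c => Real.log (∫ ω, Real.exp (c * (-(fbar ω))) ∂P))
    (dplusF dplusM : EReal)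
    (hdF : dplusF = sSup {x : EReal | ∃ c : ℝ, 0 < c ∧
      Integrable (fun ω => Real.exp (c * fbar ω)) P ∧ x = (c : EReal)})
    (hdM : dplusM = sSup {x : EReal | ∃ c : ℝ, 0 < c ∧
      Integrable (fun ω => Real.exp (c * (-(fbar ω)))) P ∧ x = (c : EReal)})
    (ηplusF ηplusM : EReal)
    (hηF : Tendsto (fun c : ℝ => ((c * deriv ΛF c - ΛF c : ℝ) : EReal))
      (comap (fun c : ℝ => (c : EReal)) (nhdsWithin dplusF (Set.Iio dplusF)))
      (nhds ηplusF))
    (hηM : Tendsto (fun c : ℝ => ((c * deriv ΛM c - ΛM c : ℝ) : EReal))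
      (comap (fun c : ℝ => (c : EReal)) (nhdsWithin dplusM (Set.Iio dplusM)))
      (nhds ηplusM))
    (η : ℝ) (hη0 : 0 < η) (hηF' : (η : EReal) < ηplusF) (hηM' : (η : EReal) < ηplusM) :
    (∃ cplus : ℝ, 0 < cplus ∧ (cplus : EReal) < dplusF ∧
      klDiv (P.tilted (fun ω => cplus * fbar ω)) P = ((η : ℝ) : EReal) ∧
      (∀ c' : ℝ, 0 < c' → (c' : EReal) < dplusF →
        klDiv (P.tilted (fun ω => c' * fbar ω)) P = ((η : ℝ) : EReal) → c' = cplus) ∧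
      IsGreatest {r : ℝ | ∃ Q : Measure Ω, IsProbabilityMeasure Q ∧ Q ≪ P ∧
          Integrable f Q ∧ klDiv Q P ≤ ((η : ℝ) : EReal) ∧
          r = ∫ x, f x ∂Q - ∫ x, f x ∂P}
        (∫ x, f x ∂(P.tilted (fun ω => cplus * fbar ω)) - ∫ x, f x ∂P) ∧
      ((∫ x, f x ∂(P.tilted (fun ω => cplus * fbar ω)) - ∫ x, f x ∂P : ℝ) : EReal)
        = ⨅ c ∈ Set.Ioi (0 : ℝ), uqObj P fbar η c) ∧
    (∃ cminus : ℝ, 0 < cminus ∧ (cminus : EReal) < dplusM ∧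
      klDiv (P.tilted (fun ω => -cminus * fbar ω)) P = ((η : ℝ) : EReal) ∧
      IsLeast {r : ℝ | ∃ Q : Measure Ω, IsProbabilityMeasure Q ∧ Q ≪ P ∧
          Integrable f Q ∧ klDiv Q P ≤ ((η : ℝ) : EReal) ∧
          r = ∫ x, f x ∂Q - ∫ x, f x ∂P}
        (∫ x, f x ∂(P.tilted (fun ω => -cminus * fbar ω)) - ∫ x, f x ∂P) ∧
      ((∫ x, f x ∂(P.tilted (fun ω => -cminus * fbar ω)) - ∫ x, f x ∂P : ℝ) : EReal)
        = -(⨅ c ∈ Set.Ioi (0 : ℝ), uqObj P (fun ω => -(fbar ω)) η c)) := by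
  have hgmeas : Measurable fbar := by rw [hfbar]; exact hf.sub measurable_const
  have hg0 : ∫ ω, fbar ω ∂P = 0 := by
    rw [hfbar, integral_sub hfP (integrable_const _), integral_const]
    simp
  have hgne : ¬ (fbar =ᵐ[P] fun _ => (0:ℝ)) := by
    intro h
    refine hnconst ?_
    filter_upwards [h] with ω hω
    rw [hfbar] at hω
    simpa [sub_eq_zero] using hω
  have hfeq : f = fun ω => fbar ω + ∫ x, f x ∂P := by
    rw [hfbar]; funext ω; ring
  -- transfer between f-form and fbar-form of the feasible set
  have hkey : ∀ Q : Measure Ω, IsProbabilityMeasure Q → Integrable f Q →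
      ∫ x, fbar x ∂Q = ∫ x, f x ∂Q - ∫ x, f x ∂P := by
    intro Q hQ hfQ
    haveI := hQ
    rw [hfbar, integral_sub hfQ (integrable_const _), integral_const]
    simp
  have hIff : ∀ Q : Measure Ω, IsProbabilityMeasure Q →
      (Integrable f Q ↔ Integrable fbar Q) := by
    intro Q hQ
    haveI := hQ
    constructor
    · intro h; rw [hfbar]; exact h.sub (integrable_const _)
    · intro h; rw [hfeq]; exact h.add (integrable_const _)
  constructor
  · -- plus side
    obtain ⟨cp, hcp0, hcpd, hkl, huniq, hexpint, hfint, hgr, hinf⟩ :=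
      uq_main_side P fbar hgmeas hg0 hgne hnbhd ΛF hΛF dplusF hdF ηplusF hηF η hη0 hηF'
    haveI hTprob : IsProbabilityMeasure (P.tilted (fun ω => cp * fbar ω)) :=
      isProbabilityMeasure_tilted hexpint
    have hfT : Integrable f (P.tilted (fun ω => cp * fbar ω)) :=
      (hIff _ hTprob).2 hfint
    have hvT : ∫ x, fbar x ∂(P.tilted (fun ω => cp * fbar ω))
        = ∫ x, f x ∂(P.tilted (fun ω => cp * fbar ω)) - ∫ x, f x ∂P :=
      hkey _ hTprob hfT
    have hSeq : {r : ℝ | ∃ Q : Measure Ω, IsProbabilityMeasure Q ∧ Q ≪ P ∧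
          Integrable f Q ∧ klDiv Q P ≤ ((η : ℝ) : EReal) ∧
          r = ∫ x, f x ∂Q - ∫ x, f x ∂P}
        = {r : ℝ | ∃ Q : Measure Ω, IsProbabilityMeasure Q ∧ Q ≪ P ∧
          Integrable fbar Q ∧ klDiv Q P ≤ ((η : ℝ) : EReal) ∧ r = ∫ x, fbar x ∂Q} := by
      ext r
      constructor
      · rintro ⟨Q, h1, h2, h3, h4, rfl⟩
        exact ⟨Q, h1, h2, (hIff Q h1).1 h3, h4, (hkey Q h1 h3).symm⟩
      · rintro ⟨Q, h1, h2, h3, h4, rfl⟩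
        exact ⟨Q, h1, h2, (hIff Q h1).2 h3, h4, hkey Q h1 ((hIff Q h1).2 h3)⟩
    refine ⟨cp, hcp0, hcpd, hkl, huniq, ?_, ?_⟩
    · rw [hSeq, ← hvT]; exact hgr
    · rw [← hvT]; exact hinf
  · -- minus side
    have hgmeas' : Measurable (fun ω => -(fbar ω)) := hgmeas.neg
    have hg0' : ∫ ω, -(fbar ω) ∂P = 0 := by rw [integral_neg, hg0, neg_zero]
    have hgne' : ¬ ((fun ω => -(fbar ω)) =ᵐ[P] fun _ => (0:ℝ)) := by
      intro h
      refine hgne ?_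
      filter_upwards [h] with ω hω
      simpa [neg_eq_zero] using hω
    have hnbhd' : ∃ ε > (0 : ℝ), ∀ c : ℝ, |c| < ε →
        Integrable (fun ω => Real.exp (c * -(fbar ω))) P := by
      obtain ⟨ε, hε, h⟩ := hnbhd
      refine ⟨ε, hε, fun c hc => ?_⟩
      have := h (-c) (by rwa [abs_neg])
      simpa [neg_mul, mul_neg] using this
    obtain ⟨cm, hcm0, hcmd, hkl, huniq, hexpint, hfint, hgr, hinf⟩ :=
      uq_main_side P (fun ω => -(fbar ω)) hgmeas' hg0' hgne' hnbhd' ΛM hΛM dplusM hdM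
        ηplusM hηM η hη0 hηM'
    have hmeq : P.tilted (fun ω => cm * -(fbar ω)) = P.tilted (fun ω => -cm * fbar ω) := by
      congr 1
      funext ω
      ring
    rw [hmeq] at hkl hfint hgr hinf
    haveI hTprob : IsProbabilityMeasure (P.tilted (fun ω => -cm * fbar ω)) := by
      have hexpint' : Integrable (fun ω => Real.exp (-cm * fbar ω)) P := by
        simpa [neg_mul, mul_neg] using hexpint
      exact isProbabilityMeasure_tilted hexpint'
    have hfbarT : Integrable fbar (P.tilted (fun ω => -cm * fbar ω)) :=
      (Integrable.neg hfint).congr (ae_of_all _ fun ω => by simp)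
    have hfT : Integrable f (P.tilted (fun ω => -cm * fbar ω)) :=
      (hIff _ hTprob).2 hfbarT
    have hVm : ∫ x, -(fbar x) ∂(P.tilted (fun ω => -cm * fbar ω))
        = -(∫ x, f x ∂(P.tilted (fun ω => -cm * fbar ω)) - ∫ x, f x ∂P) := by
      rw [integral_neg, hkey _ hTprob hfT]
    refine ⟨cm, hcm0, hcmd, hkl, ⟨?_, ?_⟩, ?_⟩
    · -- membership
      exact ⟨P.tilted (fun ω => -cm * fbar ω), hTprob, tilted_absolutelyContinuous P _,
        hfT, le_of_eq hkl, rfl⟩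
    · -- lower bound
      rintro r ⟨Q, h1, h2, h3, h4, rfl⟩
      have hmem : -(∫ x, f x ∂Q - ∫ x, f x ∂P) ∈ {r : ℝ | ∃ Q : Measure Ω,
          IsProbabilityMeasure Q ∧ Q ≪ P ∧ Integrable (fun ω => -(fbar ω)) Q ∧
          klDiv Q P ≤ ((η : ℝ) : EReal) ∧ r = ∫ x, -(fbar x) ∂Q} := by
        refine ⟨Q, h1, h2, ((hIff Q h1).1 h3).neg, h4, ?_⟩
        rw [integral_neg, hkey Q h1 h3]
      have := hgr.2 hmem
      rw [hVm] at this
      linarith [neg_le_neg this]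
    · -- infimum formula
      have : ((∫ x, -(fbar x) ∂(P.tilted (fun ω => -cm * fbar ω)) : ℝ) : EReal)
          = ⨅ c ∈ Set.Ioi (0 : ℝ), uqObj P (fun ω => -(fbar ω)) η c := hinf
      rw [hVm] at this
      rw [← this, EReal.coe_neg, neg_neg]
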